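/- Let X be a vector space with a complete invariant metric d satisfying d(λx, λy) ≤ λ d(x,y) for λ ∈ [0,1), and let f : [a,b] → X. If sup d(0, Σᵢ (f(dᵢ) − f(cᵢ))) < ∞, where the supremum is over all finite collections {[cᵢ, dᵢ]} of nonoverlapping subintervals of [a,b], then f is Riemann integrable on [a,b]. -/

import Mathlib

open Set MeasureTheory

/-- A tagged partition of `[a,b]`: points `a = t 0 < t 1 < ⋯ < t n = b`
with tags `s i ∈ [t i, t (i+1)]`. -/
structure TaggedPartition (a b : ℝ) where
  n : ℕ
  t : ℕ → ℝ
  s : ℕ → ℝ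
  npos : 0 < n
  left : t 0 = a
  right : t n = b
  mono : ∀ i < n, t i < t (i + 1)
  tag_mem : ∀ i < n, s i ∈ Set.Icc (t i) (t (i + 1))

/-- The mesh of the partition is `< δ`. -/
def TaggedPartition.MeshLT {a b : ℝ} (P : TaggedPartition a b) (δ : ℝ) : Prop :=
  ∀ i < P.n, P.t (i + 1) - P.t i < δ

/-- The set of partition points of a tagged partition. -/
def TaggedPartition.points {a b : ℝ} (P : TaggedPartition a b) : Set ℝ :=
  {x | ∃ i ≤ P.n, P.t i = x}

/-- The Riemann sum `f(Δ) = Σᵢ (tᵢ₊₁ - tᵢ) • f(sᵢ)`. -/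
def riemannSum {X : Type*} [AddCommGroup X] [Module ℝ X]
    (f : ℝ → X) {a b : ℝ} (P : TaggedPartition a b) : X :=
  ∑ i ∈ Finset.range P.n, (P.t (i + 1) - P.t i) • f (P.s i)

/-- `f` has Riemann integral `x` on `[a,b]` (mesh-based definition, metric `dist`). -/
def HasRiemannIntegral {X : Type*} [MetricSpace X] [AddCommGroup X] [Module ℝ X]
    (f : ℝ → X) (a b : ℝ) (x : X) : Prop :=
  ∀ ε > 0, ∃ δ > 0, ∀ P : TaggedPartition a b, P.MeshLT δ →
    dist (riemannSum f P) x < ε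

/-!
Put `‖x‖ = d(0, x)`: translation invariance makes this a group norm, and the scaling hypothesis
gives `‖c • x‖ ≤ c * ‖x‖` for `0 ≤ c ≤ 1`. Peeling off the smallest weight then shows that if all
subsums of the increments of `f` over nonoverlapping intervals have norm `≤ L`, every combination
of them with weights in `[0, c]` has norm `≤ c * L`.

Summation by parts writes a Riemann sum as
`b f(b) - a f(a) - ∑ tᵢ (f(tᵢ₊₁) - f(tᵢ)) - ∑ (tᵢ₊₁ - tᵢ) (f(tᵢ₊₁) - f(sᵢ))`.
For mesh `< δ` the last sum is such a combination with weights `≤ δ`, and so is the change of the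
Stieltjes sum `∑ tᵢ (f(tᵢ₊₁) - f(tᵢ))` under refinement: on the refining intervals inside
`[tᵢ, tᵢ₊₁]` the weight `tᵢ` is replaced by their left endpoints. Comparing two partitions through
a common refinement, Riemann sums of mesh `< δ` differ by at most `4δL`; they form a Cauchy net,
and completeness gives the integral.
-/

open Finset Filter Topology

section LayerCake

variable {X : Type*} [SeminormedAddCommGroup X] [Module ℝ X]

theorem norm_sum_smul_le_of_norm_subset_sum_le
    (hsmul : ∀ c ∈ Icc (0 : ℝ) 1, ∀ x : X, ‖c • x‖ ≤ c * ‖x‖)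
    {ι : Type*} (v : ι → X) {L : ℝ} (s : Finset ι) (hv : ∀ t ⊆ s, ‖∑ i ∈ t, v i‖ ≤ L)
    {c : ℝ} (hc : c ∈ Icc (0 : ℝ) 1) {w : ι → ℝ} (hw : ∀ i ∈ s, w i ∈ Icc 0 c) :
    ‖∑ i ∈ s, w i • v i‖ ≤ c * L := by
  classical
  induction s using Finset.strongInduction generalizing c w with
  | H s ih =>
    rcases s.eq_empty_or_nonempty with rfl | hs
    · simpa using mul_nonneg hc.1 (by simpa using hv ∅ (empty_subset _))
    obtain ⟨j, hj, hjmin⟩ := s.exists_min_image w hs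
    obtain ⟨hwj0, hwjc⟩ := hw j hj
    have hsplit : ∑ i ∈ s, w i • v i
        = w j • ∑ i ∈ s, v i + ∑ i ∈ s.erase j, (w i - w j) • v i := by
      rw [sum_erase _ (by rw [sub_self, zero_smul]), smul_sum, ← sum_add_distrib]
      exact sum_congr rfl fun i _ => by rw [← add_smul, add_sub_cancel]
    have hrest : ‖∑ i ∈ s.erase j, (w i - w j) • v i‖ ≤ (c - w j) * L :=
      ih _ (erase_ssubset hj) (fun t ht => hv t (ht.trans (erase_subset _ _)))
        ⟨by linarith, by linarith [hc.2]⟩ fun i hi => by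
          have hi := mem_of_mem_erase hi
          exact ⟨sub_nonneg.2 (hjmin i hi), by linarith [(hw i hi).2]⟩
    have hfirst : ‖w j • ∑ i ∈ s, v i‖ ≤ w j * L :=
      (hsmul _ ⟨hwj0, hwjc.trans hc.2⟩ _).trans (mul_le_mul_of_nonneg_left (hv s subset_rfl) hwj0)
    calc ‖∑ i ∈ s, w i • v i‖ ≤ w j * L + (c - w j) * L := by
          rw [hsplit]; exact (norm_add_le _ _).trans (add_le_add hfirst hrest)
      _ = c * L := by ring

end LayerCake

section Increments

variable {X : Type*} [SeminormedAddCommGroup X] {ι : Type*}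

def NonoverlappingIn (a b : ℝ) (s : Finset ι) (u v : ι → ℝ) : Prop :=
  (∀ i ∈ s, a ≤ u i ∧ u i ≤ v i ∧ v i ≤ b) ∧
    (s : Set ι).Pairwise fun i j => v i ≤ u j ∨ v j ≤ u i

def HasBoundedIncrementSums (f : ℝ → X) (a b L : ℝ) : Prop :=
  ∀ (m : ℕ) (c d : Fin m → ℝ), (∀ i, a ≤ c i ∧ c i < d i ∧ d i ≤ b) →
    (∀ i j, i ≠ j → d i ≤ c j ∨ d j ≤ c i) → ‖∑ i, (f (d i) - f (c i))‖ ≤ L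

variable {a b L : ℝ} {s t : Finset ι} {u v : ι → ℝ} {f : ℝ → X}

theorem NonoverlappingIn.mono (h : NonoverlappingIn a b s u v) (hts : t ⊆ s) :
    NonoverlappingIn a b t u v :=
  ⟨fun i hi => h.1 i (hts hi), h.2.mono (coe_subset.2 hts)⟩

theorem nonoverlappingIn_of_lt {κ : Type*} [LinearOrder κ] (g : ι → κ) (hg : Set.InjOn g s)
    (huv : ∀ i ∈ s, a ≤ u i ∧ u i ≤ v i ∧ v i ≤ b)
    (hlt : ∀ i ∈ s, ∀ j ∈ s, g i < g j → v i ≤ u j) : NonoverlappingIn a b s u v :=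
  ⟨huv, fun i hi j hj hij =>
    (lt_or_gt_of_ne (hg.ne hi hj hij)).imp (hlt i hi j hj) (hlt j hj i hi)⟩

theorem HasBoundedIncrementSums.nonneg (hL : HasBoundedIncrementSums f a b L) : 0 ≤ L := by
  simpa using hL 0 Fin.elim0 Fin.elim0 (fun i => i.elim0) fun i => i.elim0

theorem HasBoundedIncrementSums.norm_sum_le (hL : HasBoundedIncrementSums f a b L)
    (h : NonoverlappingIn a b s u v) : ‖∑ i ∈ s, (f (v i) - f (u i))‖ ≤ L := by
  classical
  set s' := s.filter fun i => u i < v i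
  have hs' : ∑ i ∈ s', (f (v i) - f (u i)) = ∑ i ∈ s, (f (v i) - f (u i)) :=
    sum_filter_of_ne fun i hi hne => (h.1 i hi).2.1.lt_of_ne fun heq => hne (by rw [heq, sub_self])
  set e := s'.equivFin.symm
  have hmem : ∀ k, ((e k : s') : ι) ∈ s ∧ _ := fun k => mem_filter.1 (e k).2
  rw [← hs', ← sum_coe_sort s', ← e.sum_comp]
  refine hL _ _ _ (fun k => ⟨(h.1 _ (hmem k).1).1, (hmem k).2, (h.1 _ (hmem k).1).2.2⟩)
    fun k l hkl => h.2 (hmem k).1 (hmem l).1 fun heq => hkl (e.injective (Subtype.ext heq))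

theorem HasBoundedIncrementSums.norm_sum_smul_le [Module ℝ X]
    (hsmul : ∀ c ∈ Icc (0 : ℝ) 1, ∀ x : X, ‖c • x‖ ≤ c * ‖x‖)
    (hL : HasBoundedIncrementSums f a b L) (h : NonoverlappingIn a b s u v) {c : ℝ}
    (hc : c ∈ Icc (0 : ℝ) 1) {w : ι → ℝ} (hw : ∀ i ∈ s, w i ∈ Icc 0 c) :
    ‖∑ i ∈ s, w i • (f (v i) - f (u i))‖ ≤ c * L :=
  norm_sum_smul_le_of_norm_subset_sum_le hsmul _ s (fun _ ht => hL.norm_sum_le (h.mono ht)) hc hw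

end Increments

theorem Finset.sum_Ico_eq_sum_range_sum_Ico {M : Type*} [AddCommMonoid M] (G : ℕ → M)
    {ψ : ℕ → ℕ} {n : ℕ} (hψ : MonotoneOn ψ (Set.Iic n)) :
    ∑ k ∈ Ico (ψ 0) (ψ n), G k = ∑ i ∈ range n, ∑ k ∈ Ico (ψ i) (ψ (i + 1)), G k := by
  induction n with
  | zero => simp
  | succ n ih =>
    rw [sum_range_succ, ← ih (hψ.mono (Set.Iic_subset_Iic.2 n.le_succ)),
      sum_Ico_consecutive _ (hψ (Nat.zero_le _) (by simp) (Nat.zero_le _))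
        (hψ (by simp) (by simp) n.le_succ)]

namespace TaggedPartition

variable {a b δ : ℝ} (P : TaggedPartition a b)

theorem strictMonoOn_t : StrictMonoOn P.t (Set.Iic P.n) :=
  strictMonoOn_Iic_of_lt_succ P.mono

theorem monotoneOn_t : MonotoneOn P.t (Set.Iic P.n) :=
  P.strictMonoOn_t.monotoneOn

theorem t_mem_Icc {i : ℕ} (hi : i ≤ P.n) : P.t i ∈ Icc a b := by
  have h0 := P.monotoneOn_t (Nat.zero_le _) hi (Nat.zero_le _)
  have hn := P.monotoneOn_t hi (Set.mem_Iic.2 le_rfl) hi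
  rw [P.left] at h0
  rw [P.right] at hn
  exact ⟨h0, hn⟩

theorem left_lt_right (P : TaggedPartition a b) : a < b := by
  simpa only [P.left, P.right] using P.strictMonoOn_t (Nat.zero_le _) (Set.mem_Iic.2 le_rfl) P.npos

theorem coe_image_t : ((range (P.n + 1)).image P.t : Set ℝ) = P.points := by
  ext x; simp [points]

theorem MeshLT.pos {P : TaggedPartition a b} (hP : P.MeshLT δ) : 0 < δ :=
  (sub_pos.2 (P.mono 0 P.npos)).trans (hP 0 P.npos)

theorem MeshLT.mono {P : TaggedPartition a b} {δ' : ℝ} (hP : P.MeshLT δ) (h : δ ≤ δ') :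
    P.MeshLT δ' :=
  fun i hi => (hP i hi).trans_le h

theorem exists_meshLT (hab : a < b) (hδ : 0 < δ) : ∃ P : TaggedPartition a b, P.MeshLT δ := by
  obtain ⟨m, hm⟩ := exists_nat_gt ((b - a) / δ)
  have hm0 : (0 : ℝ) < m := (div_pos (sub_pos.2 hab) hδ).trans hm
  have hstep : ∀ i : ℕ, a + (i + 1 : ℕ) * ((b - a) / m) - (a + i * ((b - a) / m)) = (b - a) / m :=
    fun i => by push_cast; ring
  have hstep_lt : (b - a) / m < δ := by
    rw [div_lt_iff₀ hm0]; rw [div_lt_iff₀ hδ] at hm; linarith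
  have hstep_pos : 0 < (b - a) / m := div_pos (sub_pos.2 hab) hm0
  refine ⟨⟨m, fun i => a + i * ((b - a) / m), fun i => a + i * ((b - a) / m),
    by exact_mod_cast hm0, by simp, by field_simp; ring,
    fun i _ => by linarith [hstep i], fun i _ => ⟨le_rfl, by linarith [hstep i]⟩⟩,
    fun i _ => by simpa only [hstep] using hstep_lt⟩

theorem exists_points_eq (hab : a < b) (F : Finset ℝ) (ha : a ∈ F) (hb : b ∈ F)
    (hF : ∀ x ∈ F, x ∈ Icc a b) : ∃ R : TaggedPartition a b, R.points = F := by
  set k := F.card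
  have hk : 1 < k := one_lt_card.2 ⟨a, ha, b, hb, hab.ne⟩
  set e := F.orderEmbOfFin rfl
  set t : ℕ → ℝ := fun i => if h : i < k then e ⟨i, h⟩ else b
  have ht : ∀ i (hi : i < k), t i = e ⟨i, hi⟩ := fun i hi => dif_pos hi
  have hmin : F.min' ⟨a, ha⟩ = a :=
    le_antisymm (min'_le F a ha) (le_min' _ _ _ fun x hx => (hF x hx).1)
  have hmax : F.max' ⟨b, hb⟩ = b :=
    le_antisymm (max'_le _ _ _ fun x hx => (hF x hx).2) (le_max' F b hb)
  refine ⟨⟨k - 1, t, t, by omega, ?_, ?_, fun i hi => ?_, fun i hi => ⟨le_rfl, ?_⟩⟩, ?_⟩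
  · rw [ht 0 (by omega), orderEmbOfFin_zero rfl (by omega), hmin]
  · rw [ht (k - 1) (by omega), orderEmbOfFin_last rfl (by omega), hmax]
  · rw [ht i (by omega), ht (i + 1) (by omega)]
    exact e.strictMono (Fin.mk_lt_mk.2 i.lt_succ_self)
  · rw [ht i (by omega), ht (i + 1) (by omega)]
    exact (e.strictMono (Fin.mk_lt_mk.2 i.lt_succ_self)).le
  · change {x | ∃ i ≤ k - 1, t i = x} = (F : Set ℝ)
    ext x
    constructor
    · rintro ⟨i, hi, rfl⟩
      rw [ht i (by omega)]
      exact orderEmbOfFin_mem F rfl _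
    · intro hx
      obtain ⟨⟨i, hi⟩, rfl⟩ : x ∈ Set.range e := by rwa [range_orderEmbOfFin]
      exact ⟨i, by omega, ht i hi⟩

theorem exists_points_eq_union (P Q : TaggedPartition a b) :
    ∃ R : TaggedPartition a b, R.points = P.points ∪ Q.points := by
  classical
  obtain ⟨R, hR⟩ := exists_points_eq P.left_lt_right
    ((range (P.n + 1)).image P.t ∪ (range (Q.n + 1)).image Q.t)
    (mem_union_left _ (mem_image.2 ⟨0, by simp, P.left⟩))
    (mem_union_left _ (mem_image.2 ⟨P.n, by simp, P.right⟩))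
    (by
      intro x hx
      simp only [Finset.mem_union, Finset.mem_image, Finset.mem_range] at hx
      rcases hx with ⟨i, hi, rfl⟩ | ⟨i, hi, rfl⟩ <;> exact t_mem_Icc _ (by omega))
  exact ⟨R, by rw [hR, coe_union, coe_image_t, coe_image_t]⟩

theorem exists_reindex {P R : TaggedPartition a b} (h : P.points ⊆ R.points) :
    ∃ ψ : ℕ → ℕ, StrictMonoOn ψ (Set.Iic P.n) ∧ ψ 0 = 0 ∧ ψ P.n = R.n ∧
      ∀ i ≤ P.n, ψ i ≤ R.n ∧ R.t (ψ i) = P.t i := by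
  have hex : ∀ i, ∃ k, i ≤ P.n → k ≤ R.n ∧ R.t k = P.t i := fun i => by
    by_cases hi : i ≤ P.n
    · obtain ⟨k, hk, hkt⟩ := h ⟨i, hi, rfl⟩
      exact ⟨k, fun _ => ⟨hk, hkt⟩⟩
    · exact ⟨0, fun h' => absurd h' hi⟩
  choose ψ hψ using hex
  have hψa : ψ 0 = 0 := R.strictMonoOn_t.injOn (hψ 0 (Nat.zero_le _)).1 (Nat.zero_le _) (by
    rw [(hψ 0 (Nat.zero_le _)).2, P.left, R.left])
  have hψb : ψ P.n = R.n := R.strictMonoOn_t.injOn (hψ _ le_rfl).1 (Set.mem_Iic.2 le_rfl) (by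
    rw [(hψ _ le_rfl).2, P.right, R.right])
  refine ⟨ψ, fun i hi j hj hij => ?_, hψa, hψb, hψ⟩
  have hlt : R.t (ψ i) < R.t (ψ j) := by
    rw [(hψ i hi).2, (hψ j hj).2]; exact P.strictMonoOn_t hi hj hij
  exact (R.strictMonoOn_t.lt_iff_lt (hψ i hi).1 (hψ j hj).1).1 hlt

section Sums

variable {X : Type*} [AddCommGroup X] [Module ℝ X] (f : ℝ → X)

def stieltjesSum : X :=
  ∑ i ∈ range P.n, P.t i • (f (P.t (i + 1)) - f (P.t i))

def tagError : X :=
  ∑ i ∈ range P.n, (P.t (i + 1) - P.t i) • (f (P.t (i + 1)) - f (P.s i))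

theorem riemannSum_eq_sub_stieltjesSum_sub_tagError :
    riemannSum f P = b • f b - a • f a - P.stieltjesSum f - P.tagError f := by
  have htel := sum_range_sub (fun i => P.t i • f (P.t i)) P.n
  simp only [P.left, P.right] at htel
  rw [← htel, stieltjesSum, tagError, riemannSum, ← sum_sub_distrib, ← sum_sub_distrib]
  refine sum_congr rfl fun i _ => ?_
  simp only [sub_smul, smul_sub]
  abel

theorem stieltjesSum_sub_eq_sum_sigma {R : TaggedPartition a b} {ψ : ℕ → ℕ}
    (hψ : MonotoneOn ψ (Set.Iic P.n)) (hψ0 : ψ 0 = 0) (hψn : ψ P.n = R.n)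
    (hψt : ∀ i ≤ P.n, R.t (ψ i) = P.t i) :
    R.stieltjesSum f - P.stieltjesSum f =
      ∑ x ∈ (range P.n).sigma (fun i => Ico (ψ i) (ψ (i + 1))),
        (R.t x.2 - P.t x.1) • (f (R.t (x.2 + 1)) - f (R.t x.2)) := by
  have hP : P.stieltjesSum f = ∑ i ∈ range P.n, ∑ k ∈ Ico (ψ i) (ψ (i + 1)),
      P.t i • (f (R.t (k + 1)) - f (R.t k)) := by
    refine sum_congr rfl fun i hi => ?_
    have hi := mem_range.1 hi
    rw [← smul_sum, sum_Ico_sub (fun k => f (R.t k)) (hψ (Set.mem_Iic.2 hi.le) (Set.mem_Iic.2 hi)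
      i.le_succ), hψt i hi.le, hψt (i + 1) hi]
  rw [hP, stieltjesSum, range_eq_Ico, ← hψ0, ← hψn, sum_Ico_eq_sum_range_sum_Ico _ hψ, sum_sigma,
    ← sum_sub_distrib]
  exact sum_congr rfl fun i _ => by rw [← sum_sub_distrib]; simp only [sub_smul]

end Sums

section Estimates

variable {X : Type*} [SeminormedAddCommGroup X] [Module ℝ X] {f : ℝ → X} {L : ℝ}

theorem norm_tagError_le (hsmul : ∀ c ∈ Icc (0 : ℝ) 1, ∀ x : X, ‖c • x‖ ≤ c * ‖x‖)
    (hL : HasBoundedIncrementSums f a b L) (hδ : δ ≤ 1) {P : TaggedPartition a b}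
    (hP : P.MeshLT δ) : ‖P.tagError f‖ ≤ δ * L := by
  refine hL.norm_sum_smul_le hsmul (nonoverlappingIn_of_lt id (Set.injOn_id _) (fun i hi => ?_)
    fun i hi j hj hij => ?_) ⟨hP.pos.le, hδ⟩ fun i hi => ?_
  · have hi := mem_range.1 hi
    exact ⟨(P.t_mem_Icc hi.le).1.trans (P.tag_mem i hi).1, (P.tag_mem i hi).2, (P.t_mem_Icc hi).2⟩
  · have hj := mem_range.1 hj
    exact (P.monotoneOn_t (Set.mem_Iic.2 (hij.trans hj)) (Set.mem_Iic.2 hj.le)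
      hij).trans (P.tag_mem j hj).1
  · have hi := mem_range.1 hi
    exact ⟨sub_nonneg.2 (P.mono i hi).le, (hP i hi).le⟩

theorem norm_stieltjesSum_sub_le (hsmul : ∀ c ∈ Icc (0 : ℝ) 1, ∀ x : X, ‖c • x‖ ≤ c * ‖x‖)
    (hL : HasBoundedIncrementSums f a b L) (hδ : δ ≤ 1) {P R : TaggedPartition a b}
    (hP : P.MeshLT δ) (hPR : P.points ⊆ R.points) :
    ‖R.stieltjesSum f - P.stieltjesSum f‖ ≤ δ * L := by
  obtain ⟨ψ, hψ, hψ0, hψn, hψR⟩ := exists_reindex hPR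
  rw [P.stieltjesSum_sub_eq_sum_sigma f hψ.monotoneOn hψ0 hψn fun i hi => (hψR i hi).2]
  set B := (range P.n).sigma fun i => Ico (ψ i) (ψ (i + 1))
  have hB : ∀ x ∈ B, x.1 < P.n ∧ x.2 < R.n ∧ P.t x.1 ≤ R.t x.2 ∧ R.t (x.2 + 1) ≤ P.t (x.1 + 1) := by
    rintro ⟨i, k⟩ hx
    simp only [B, Finset.mem_sigma, Finset.mem_range, Finset.mem_Ico] at hx
    obtain ⟨hi, hik, hki⟩ := hx
    obtain ⟨hψi, hRi⟩ := hψR i hi.le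
    obtain ⟨hψi1, hRi1⟩ := hψR (i + 1) hi
    show i < P.n ∧ k < R.n ∧ P.t i ≤ R.t k ∧ R.t (k + 1) ≤ P.t (i + 1)
    refine ⟨hi, by omega, ?_, ?_⟩
    · rw [← hRi]; exact R.monotoneOn_t (Set.mem_Iic.2 hψi) (Set.mem_Iic.2 (by omega)) hik
    · rw [← hRi1]; exact R.monotoneOn_t (Set.mem_Iic.2 (by omega)) (Set.mem_Iic.2 hψi1) hki
  have hsep : ∀ x ∈ B, ∀ y ∈ B, x.1 < y.1 → R.t (x.2 + 1) ≤ R.t y.2 := fun x hx y hy hxy =>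
    calc R.t (x.2 + 1) ≤ P.t (x.1 + 1) := (hB x hx).2.2.2
      _ ≤ P.t y.1 := P.monotoneOn_t (Set.mem_Iic.2 ((hB y hy).1.trans' hxy))
          (Set.mem_Iic.2 (hB y hy).1.le) hxy
      _ ≤ R.t y.2 := (hB y hy).2.2.1
  refine hL.norm_sum_smul_le hsmul (nonoverlappingIn_of_lt Sigma.snd (fun x hx y hy hxy => ?_)
    (fun x hx => ?_) fun x hx y hy hxy => ?_) ⟨hP.pos.le, hδ⟩ fun x hx => ?_
  · have hRx := R.mono x.2 (hB x hx).2.1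
    refine Sigma.ext ?_ (heq_of_eq hxy)
    by_contra hne
    rcases lt_or_gt_of_ne hne with h | h
    · linarith [hsep x hx y hy h, congrArg R.t hxy]
    · linarith [hsep y hy x hx h, congrArg R.t hxy, congrArg (fun k => R.t (k + 1)) hxy]
  · obtain ⟨-, hk, -, -⟩ := hB x hx
    exact ⟨(R.t_mem_Icc hk.le).1, (R.mono _ hk).le, (R.t_mem_Icc hk).2⟩
  · exact R.monotoneOn_t (Set.mem_Iic.2 (hB x hx).2.1) (Set.mem_Iic.2 (hB y hy).2.1.le) hxy
  · obtain ⟨hi, hk, hik, hki⟩ := hB x hx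
    exact ⟨sub_nonneg.2 hik, by linarith [R.mono x.2 hk, hP x.1 hi]⟩

theorem norm_riemannSum_sub_le (hsmul : ∀ c ∈ Icc (0 : ℝ) 1, ∀ x : X, ‖c • x‖ ≤ c * ‖x‖)
    (hL : HasBoundedIncrementSums f a b L) (hδ : δ ≤ 1) {P Q : TaggedPartition a b}
    (hP : P.MeshLT δ) (hQ : Q.MeshLT δ) :
    ‖riemannSum f P - riemannSum f Q‖ ≤ 4 * δ * L := by
  obtain ⟨R, hR⟩ := exists_points_eq_union P Q
  have hPR := norm_stieltjesSum_sub_le hsmul hL hδ hP (hR ▸ Set.subset_union_left)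
  have hQR := norm_stieltjesSum_sub_le hsmul hL hδ hQ (hR ▸ Set.subset_union_right)
  have hPe := norm_tagError_le hsmul hL hδ hP
  have hQe := norm_tagError_le hsmul hL hδ hQ
  rw [riemannSum_eq_sub_stieltjesSum_sub_tagError, riemannSum_eq_sub_stieltjesSum_sub_tagError]
  calc _ = ‖(R.stieltjesSum f - P.stieltjesSum f) - (R.stieltjesSum f - Q.stieltjesSum f)
          + (Q.tagError f - P.tagError f)‖ := by congr 1; abel
    _ ≤ ‖R.stieltjesSum f - P.stieltjesSum f‖ + ‖R.stieltjesSum f - Q.stieltjesSum f‖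
          + (‖Q.tagError f‖ + ‖P.tagError f‖) :=
        (norm_add_le _ _).trans (add_le_add (norm_sub_le _ _) (norm_sub_le _ _))
    _ ≤ 4 * δ * L := by linarith

end Estimates

variable (a b)

def meshFilter : Filter (TaggedPartition a b) :=
  ⨅ δ > 0, 𝓟 {P | P.MeshLT δ}

theorem hasBasis_meshFilter :
    (meshFilter a b).HasBasis (fun δ : ℝ => 0 < δ) fun δ => {P | P.MeshLT δ} :=
  hasBasis_biInf_principal' (fun δ hδ ε hε => ⟨min δ ε, lt_min hδ hε,
    fun _ hP => hP.mono (min_le_left _ _), fun _ hP => hP.mono (min_le_right _ _)⟩) ⟨1, one_pos⟩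

theorem meshFilter_neBot (hab : a < b) : (meshFilter a b).NeBot :=
  (hasBasis_meshFilter a b).neBot_iff.2 fun hδ => exists_meshLT hab hδ

variable {a b}

theorem hasRiemannIntegral_iff_tendsto {X : Type*} [MetricSpace X] [AddCommGroup X]
    [Module ℝ X] {f : ℝ → X} {x : X} :
    HasRiemannIntegral f a b x ↔ Tendsto (riemannSum f) (meshFilter a b) (𝓝 x) :=
  ((hasBasis_meshFilter a b).tendsto_iff Metric.nhds_basis_ball).symm

end TaggedPartition

open TaggedPartition in
theorem exists_hasRiemannIntegral_of_hasBoundedIncrementSums {X : Type*} [NormedAddCommGroup X]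
    [Module ℝ X] [CompleteSpace X] (hsmul : ∀ c ∈ Icc (0 : ℝ) 1, ∀ x : X, ‖c • x‖ ≤ c * ‖x‖)
    {a b L : ℝ} (hab : a < b) {f : ℝ → X} (hL : HasBoundedIncrementSums f a b L) :
    ∃ x, HasRiemannIntegral f a b x := by
  have := meshFilter_neBot a b hab
  simp_rw [hasRiemannIntegral_iff_tendsto]
  refine cauchy_map_iff_exists_tendsto.1 (Metric.cauchy_iff.2 ⟨inferInstance, fun ε hε => ?_⟩)
  obtain ⟨c, hc, hcε⟩ := exists_pos_mul_lt hε (4 * L)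
  have hδε : 4 * min c 1 * L < ε := by
    nlinarith [min_le_left c 1, hL.nonneg]
  refine ⟨_, image_mem_map ((hasBasis_meshFilter a b).mem_of_mem (lt_min hc one_pos)), ?_⟩
  rintro _ ⟨P, hP, rfl⟩ _ ⟨Q, hQ, rfl⟩
  rw [dist_eq_norm]
  exact (norm_riemannSum_sub_le hsmul hL (min_le_right c 1) hP hQ).trans_lt hδε

/-- the bounded-variation-type condition over nonoverlapping
subintervals implies Riemann integrability. -/
theorem riemannIntegrable_of_bounded_sums
    {X : Type*} [MetricSpace X] [AddCommGroup X] [Module ℝ X] [CompleteSpace X]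
    (hinv : ∀ x y z : X, dist (x + z) (y + z) = dist x y)
    (hscale : ∀ l : ℝ, 0 ≤ l → l < 1 → ∀ x y : X, dist (l • x) (l • y) ≤ l * dist x y)
    (a b : ℝ) (hab : a < b) (f : ℝ → X) (L : ℝ)
    (hL : ∀ (m : ℕ) (c d : Fin m → ℝ),
      (∀ i, a ≤ c i ∧ c i < d i ∧ d i ≤ b) →
      (∀ i j, i ≠ j → d i ≤ c j ∨ d j ≤ c i) →
      dist 0 (∑ i, (f (d i) - f (c i))) ≤ L) :
    ∃ x, HasRiemannIntegral f a b x := by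
  let _ : Norm X := ⟨dist 0⟩
  let _ : NormedAddCommGroup X := NormedAddCommGroup.ofAddDist' (fun _ => rfl)
    fun x y z => by rw [add_comm z x, add_comm z y, hinv]
  -- `‖x‖` unfolds to `dist 0 x`, so `hL` is literally `HasBoundedIncrementSums f a b L`.
  refine exists_hasRiemannIntegral_of_hasBoundedIncrementSums (fun c hc x => ?_) hab hL
  rcases hc.2.eq_or_lt with rfl | hc1
  · simp
  · simpa using hscale c hc.1 hc1 x 0
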